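/- Let G be a finitely generated group with finite generating set S and Cayley graph X = Γ(G,S). Suppose there exist a positive integer n and a sequence of positive integers (r_i)_{i≥1} such that for every i there is a compact subset K_i of X with: (1) diam(K_i) < n; (2) N(K_i, r_i)∖K_i has at least two connected components A_i and B_i; and (3) r_i → ∞, diam(A_i) → ∞ and diam(B_i) → ∞ as i → ∞. Then e(G) > 1. -/

import Mathlib

/-- The Cayley graph of a group `G` with respect to a generating set `S`. -/
def cayleyGraph {G : Type*} [Group G] (S : Set G) : SimpleGraph G where
  Adj x y := x ≠ y ∧ (x⁻¹ * y ∈ S ∨ y⁻¹ * x ∈ S)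
  symm := ⟨fun x y h => ⟨h.1.symm, h.2.symm⟩⟩
  loopless := ⟨fun x h => h.1 rfl⟩

/-- The diameter (in `ℕ∞`) of a subset of the Cayley graph with respect to
the word (graph) metric. -/
noncomputable def graphDiam {G : Type*} [Group G] (S : Set G) (A : Set G) : ℕ∞ :=
  ⨆ (x ∈ A) (y ∈ A), ((cayleyGraph S).dist x y : ℕ∞)

/-- The open `r`-neighbourhood `N(A, r) = {y | d(y, A) < r}` of a set `A`
in the word metric. -/
def graphNbhd {G : Type*} [Group G] (S : Set G) (A : Set G) (r : ℕ) : Set G :=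
  {y : G | ∃ a ∈ A, (cayleyGraph S).dist y a < r}

/-- `A` is (the vertex set of) a connected component of the subgraph of `H`
induced on the set `W`. -/
def IsCompOf {G : Type*} (H : SimpleGraph G) (W : Set G) (A : Set G) : Prop :=
  ∃ C : (H.induce W).ConnectedComponent, A = Subtype.val '' C.supp

/-- The number of ends of the Cayley graph of `G` w.r.t. `S`: the supremum over finite
(i.e. compact) sets `K` of the number of infinite (i.e. unbounded) connected components
of the complement of `K`. -/
noncomputable def numEnds {G : Type*} [Group G] (S : Set G) : ℕ∞ :=
  ⨆ (K : Set G) (_ : K.Finite),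
    ENat.card {C : (cayleyGraph S).ComponentCompl K // C.supp.Infinite}

/-!
Translate each `Kᵢ` by the inverse of a point of `Kᵢ` adjacent to `Aᵢ`. The translate of `Kᵢ`,
together with a point of each of the translates of `Aᵢ` and `Bᵢ`, then lies in a fixed finite ball
around `1`, so a single configuration `(T, u, v)` recurs for infinitely many `i`. The points `u` and
`v` lie in different components of the complement of `T`: a walk from `u` to `v` avoiding `T` stays
in `N(T, rᵢ)` once `rᵢ` exceeds its length, and would then join the translates of `Aᵢ` and `Bᵢ`.
Each of these two components contains translates of the `Aᵢ` (resp. `Bᵢ`) of unbounded diameter, so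
both are infinite.
-/

open Filter Topology Pointwise

namespace SimpleGraph

variable {V V' : Type*} {H : SimpleGraph V} {W W' K : Set V} {x y : V}

def reachableWithin (H : SimpleGraph V) (W : Set V) (x : V) : Set V :=
  {y | ∃ p : H.Walk x y, ∀ z ∈ p.support, z ∈ W}

lemma reachableWithin_mono (h : W ⊆ W') : H.reachableWithin W x ⊆ H.reachableWithin W' x :=
  fun _ ⟨p, hp⟩ ↦ ⟨p, fun z hz ↦ h (hp z hz)⟩

lemma self_mem_reachableWithin (hx : x ∈ W) : x ∈ H.reachableWithin W x :=
  ⟨.nil, by simpa using hx⟩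

lemma reachableWithin_subset : H.reachableWithin W x ⊆ W :=
  fun y ⟨p, hp⟩ ↦ hp y p.end_mem_support

lemma image_reachableWithin_subset (f : H →g H') :
    f '' H.reachableWithin W x ⊆ H'.reachableWithin (f '' W) (f x) := by
  rintro _ ⟨y, ⟨p, hp⟩, rfl⟩
  refine ⟨p.map f, fun z hz ↦ ?_⟩
  obtain ⟨w, hw, rfl⟩ := List.mem_map.mp ((p.support_map f) ▸ hz)
  exact ⟨w, hp w hw, rfl⟩

lemma Iso.image_reachableWithin (e : H ≃g H') :
    e '' H.reachableWithin W x = H'.reachableWithin (e '' W) (e x) := by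
  refine (image_reachableWithin_subset e.toHom).antisymm fun y hy ↦ ⟨e.symm y, ?_, by simp⟩
  simpa [Set.image_image] using image_reachableWithin_subset e.symm.toHom ⟨y, hy, rfl⟩

lemma dist_map_le (f : H →g H') (h : H.Reachable x y) :
    H'.dist (f x) (f y) ≤ H.dist x y := by
  obtain ⟨p, hp⟩ := h.exists_walk_length_eq_dist
  exact hp ▸ (dist_le (p.map f)).trans_eq (p.length_map f)

lemma Iso.dist_map (e : H ≃g H') (x y : V) :
    H'.dist (e x) (e y) = H.dist x y := by
  by_cases h : H.Reachable x y
  · refine (dist_map_le e.toHom h).antisymm ?_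
    simpa using dist_map_le e.symm.toHom (x := e x) (y := e y) (Iso.reachable_iff.mpr h)
  · rw [dist_eq_zero_of_not_reachable h, dist_eq_zero_of_not_reachable (mt Iso.reachable_iff.mp h)]

lemma image_val_supp_connectedComponentMk_induce (hx : x ∈ W) :
    Subtype.val '' ((H.induce W).connectedComponentMk ⟨x, hx⟩).supp = H.reachableWithin W x := by
  ext y
  constructor
  · rintro ⟨⟨y, hy⟩, hyx, rfl⟩
    obtain ⟨q⟩ := ConnectedComponent.exact hyx
    have := image_reachableWithin_subset (W := Set.univ) (Embedding.induce W).toHom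
      ⟨_, ⟨q.reverse, fun _ _ ↦ trivial⟩, rfl⟩
    rwa [Set.image_univ, show Set.range (Embedding.induce W).toHom = W from Subtype.range_coe]
      at this
  · rintro ⟨p, hp⟩
    exact ⟨⟨y, hp y p.end_mem_support⟩,
      ConnectedComponent.sound (p.induce W hp).reachable.symm, rfl⟩

lemma coe_componentComplMk (hx : x ∉ K) :
    (H.componentComplMk hx : Set V) = H.reachableWithin Kᶜ x := by
  rw [← image_val_supp_connectedComponentMk_induce (show x ∈ Kᶜ from hx)]
  ext y
  simp [componentComplMk, ConnectedComponent.mem_supp_iff]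

lemma exists_adj_of_walk (p : H.Walk x y) (hx : x ∉ K) (hy : y ∈ K)
    (hp : ∀ z ∈ p.support, z ∈ W) : ∃ u ∈ H.reachableWithin (W \ K) x, ∃ k ∈ K, H.Adj u k := by
  induction p with
  | nil => exact absurd hy hx
  | @cons a b c hab q ih =>
    by_cases hb : b ∈ K
    · exact ⟨a, self_mem_reachableWithin ⟨hp a (by simp), hx⟩, b, hb, hab⟩
    obtain ⟨u, ⟨q', hq'⟩, k, hk, huk⟩ := ih hb hy fun z hz ↦ hp z (by simp [hz])
    refine ⟨u, ⟨.cons hab q', fun z hz ↦ ?_⟩, k, hk, huk⟩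
    rcases List.mem_cons.mp (Walk.support_cons hab q' ▸ hz) with rfl | hz
    · exact ⟨hp z (by simp), hx⟩
    · exact hq' z hz

lemma dist_le_length_of_mem_support (p : H.Walk x y) {z : V} (hz : z ∈ p.support) :
    H.dist x z ≤ p.length := by
  classical
  exact (dist_le (p.takeUntil z hz)).trans (p.length_takeUntil_le_length hz)

lemma finite_setOf_edist_le (hH : ∀ v, (H.neighborSet v).Finite) (c : V) (m : ℕ) :
    {v | H.edist v c ≤ m}.Finite := by
  induction m with
  | zero => simp [edist_eq_zero_iff]
  | succ m ih =>
    refine ((ih.biUnion fun w _ ↦ hH w).union ih).subset fun v hv ↦ ?_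
    obtain ⟨p, hp⟩ := exists_walk_of_edist_ne_top (ne_top_of_le_ne_top (by simp) hv.out)
    cases p with
    | nil => exact Or.inr (by simp)
    | cons hvw q =>
      refine Or.inl (Set.mem_biUnion ?_ hvw.symm)
      have hq : q.length + 1 ≤ m + 1 := by
        have hv : H.edist v c ≤ (m + 1 : ℕ) := hv
        rwa [← hp, Walk.length_cons, Nat.cast_le] at hv
      exact (edist_le q).trans (by exact_mod_cast Nat.le_of_succ_le_succ hq)

end SimpleGraph

lemma isCompOf_iff {V : Type*} {H : SimpleGraph V} {W A : Set V} :
    IsCompOf H W A ↔ ∃ x ∈ W, A = H.reachableWithin W x := by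
  constructor
  · rintro ⟨C, rfl⟩
    obtain ⟨⟨x, hx⟩, rfl⟩ := C.exists_rep
    exact ⟨x, hx, SimpleGraph.image_val_supp_connectedComponentMk_induce hx⟩
  · rintro ⟨x, hx, rfl⟩
    exact ⟨_, (SimpleGraph.image_val_supp_connectedComponentMk_induce hx).symm⟩

namespace IsCompOf

variable {V : Type*} {H : SimpleGraph V} {W A B : Set V} {x : V}

lemma eq_reachableWithin (hA : IsCompOf H W A) (hx : x ∈ A) : A = H.reachableWithin W x := by
  obtain ⟨C, rfl⟩ := hA
  obtain ⟨⟨x, hxW⟩, hxC, rfl⟩ := hx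
  rw [← SimpleGraph.image_val_supp_connectedComponentMk_induce hxW,
    (SimpleGraph.ConnectedComponent.mem_supp_iff _ _).mp hxC]

lemma subset (hA : IsCompOf H W A) : A ⊆ W := by
  obtain ⟨x, -, rfl⟩ := isCompOf_iff.mp hA
  exact SimpleGraph.reachableWithin_subset

lemma eq_of_mem (hA : IsCompOf H W A) (hB : IsCompOf H W B) (hxA : x ∈ A) (hxB : x ∈ B) :
    A = B :=
  (hA.eq_reachableWithin hxA).trans (hB.eq_reachableWithin hxB).symm

lemma subset_componentComplMk {K : Set V} (hA : IsCompOf H W A) (hWK : W ⊆ Kᶜ) (hx : x ∈ A)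
    (hxK : x ∉ K) : A ⊆ H.componentComplMk hxK := by
  rw [SimpleGraph.coe_componentComplMk, eq_reachableWithin hA hx]
  exact SimpleGraph.reachableWithin_mono hWK

end IsCompOf

section Cayley

open SimpleGraph

variable {G : Type*} [Group G] {S : Set G}

lemma cayleyGraph_adj_mul_left (g : G) {x y : G} :
    (cayleyGraph S).Adj (g * x) (g * y) ↔ (cayleyGraph S).Adj x y := by
  simp only [cayleyGraph, mul_inv_rev, mul_assoc, inv_mul_cancel_left, ne_eq, mul_right_inj]

def cayleyGraphMulLeft (g : G) : cayleyGraph S ≃g cayleyGraph S :=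
  { Equiv.mulLeft g with map_rel_iff' := cayleyGraph_adj_mul_left g }

@[simp]
lemma cayleyGraphMulLeft_apply (g x : G) : cayleyGraphMulLeft (S := S) g x = g * x := rfl

lemma cayleyGraph_reachable_one (hgen : Subgroup.closure S = ⊤) (g : G) :
    (cayleyGraph S).Reachable 1 g := by
  induction (hgen ▸ Subgroup.mem_top g : g ∈ Subgroup.closure S) using
    Subgroup.closure_induction with
  | mem s hs =>
    by_cases h : s = 1
    · subst h; rfl
    · exact Adj.reachable ⟨Ne.symm h, Or.inl (by simpa using hs)⟩
  | one => exact Reachable.refl 1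
  | mul a b _ _ ha hb => exact ha.trans (by simpa using hb.map (cayleyGraphMulLeft a).toHom)
  | inv a _ ha => simpa using (ha.map (cayleyGraphMulLeft a⁻¹).toHom).symm

lemma cayleyGraph_connected (hgen : Subgroup.closure S = ⊤) : (cayleyGraph S).Connected :=
  have : Nonempty G := ⟨1⟩
  ⟨fun x y ↦ (cayleyGraph_reachable_one hgen x).symm.trans (cayleyGraph_reachable_one hgen y)⟩

lemma image_cayleyGraphMulLeft (g : G) (A : Set G) :
    cayleyGraphMulLeft (S := S) g '' A = g • A := by
  rw [← Set.image_smul]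
  rfl

lemma cayleyGraph_dist_mul_left (g x y : G) :
    (cayleyGraph S).dist (g * x) (g * y) = (cayleyGraph S).dist x y :=
  (cayleyGraphMulLeft g).dist_map x y

lemma cayleyGraph_neighborSet_finite (hS : S.Finite) (x : G) :
    ((cayleyGraph S).neighborSet x).Finite := by
  refine ((hS.union hS.inv).image (x * ·)).subset fun y hy ↦ ⟨x⁻¹ * y, ?_, by simp⟩
  rcases hy.2 with h | h
  · exact Or.inl h
  · exact Or.inr (by simpa using h)

lemma finite_graphNbhd (hS : S.Finite) (hgen : Subgroup.closure S = ⊤) {K : Set G}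
    (hK : K.Finite) (r : ℕ) : (graphNbhd S K r).Finite := by
  refine (hK.biUnion fun k _ ↦
    finite_setOf_edist_le (cayleyGraph_neighborSet_finite hS) k r).subset ?_
  rintro y ⟨k, hk, hyk⟩
  refine Set.mem_biUnion hk ?_
  rw [Set.mem_ofPred_eq, ← ((cayleyGraph_connected hgen).preconnected y k).coe_dist_eq_edist]
  exact_mod_cast hyk.le

lemma graphNbhd_smul (g : G) (K : Set G) (r : ℕ) :
    graphNbhd S (g • K) r = g • graphNbhd S K r := by
  ext y
  rw [Set.mem_smul_set_iff_inv_smul_mem, ← Set.image_smul]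
  simp only [graphNbhd, Set.mem_ofPred_eq, Set.exists_mem_image, smul_eq_mul]
  simp only [← cayleyGraph_dist_mul_left g⁻¹ y, inv_mul_cancel_left]

lemma IsCompOf.smul {W A : Set G} (hA : IsCompOf (cayleyGraph S) W A) (g : G) :
    IsCompOf (cayleyGraph S) (g • W) (g • A) := by
  obtain ⟨x, hx, rfl⟩ := isCompOf_iff.mp hA
  refine isCompOf_iff.mpr ⟨g * x, Set.smul_mem_smul_set hx, ?_⟩
  rw [← image_cayleyGraphMulLeft, ← image_cayleyGraphMulLeft, Iso.image_reachableWithin]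
  rfl

lemma IsCompOf.smul_graphNbhd {K A : Set G} {r : ℕ}
    (hA : IsCompOf (cayleyGraph S) (graphNbhd S K r \ K) A) (g : G) :
    IsCompOf (cayleyGraph S) (graphNbhd S (g • K) r \ g • K) (g • A) := by
  rw [graphNbhd_smul, ← Set.smul_set_sdiff]
  exact hA.smul g

lemma dist_le_graphDiam {A : Set G} {x y : G} (hx : x ∈ A) (hy : y ∈ A) :
    ((cayleyGraph S).dist x y : ℕ∞) ≤ graphDiam S A :=
  le_iSup₂_of_le x hx (le_iSup₂_of_le (f := fun y _ ↦ ((cayleyGraph S).dist x y : ℕ∞)) y hy le_rfl)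

lemma graphDiam_mono {A B : Set G} (h : A ⊆ B) : graphDiam S A ≤ graphDiam S B :=
  iSup₂_le fun _ hx ↦ iSup₂_le fun _ hy ↦ dist_le_graphDiam (h hx) (h hy)

lemma graphDiam_lt_top {A : Set G} (hA : A.Finite) : graphDiam S A < ⊤ := by
  obtain ⟨N, hN⟩ := ((hA.prod hA).image fun p ↦ (cayleyGraph S).dist p.1 p.2).bddAbove
  refine (iSup₂_le fun x hx ↦ iSup₂_le fun y hy ↦ ?_).trans_lt (ENat.natCast_lt_top N)
  exact_mod_cast hN ⟨(x, y), ⟨hx, hy⟩, rfl⟩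

lemma graphDiam_smul (g : G) (A : Set G) : graphDiam S (g • A) = graphDiam S A := by
  simp only [graphDiam, ← Set.image_smul, iSup_image, smul_eq_mul, cayleyGraph_dist_mul_left]

end Cayley

section Separation

open SimpleGraph

variable {G : Type*} [Group G] {S : Set G}

lemma exists_adj_of_isCompOf_graphNbhd (hgen : Subgroup.closure S = ⊤) {K A : Set G} {r : ℕ}
    (hA : IsCompOf (cayleyGraph S) (graphNbhd S K r \ K) A) :
    ∃ u ∈ A, ∃ k ∈ K, (cayleyGraph S).Adj u k := by
  obtain ⟨a, ⟨⟨k, hk, hak⟩, haK⟩, rfl⟩ := isCompOf_iff.mp hA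
  obtain ⟨p, hp⟩ := (cayleyGraph_connected hgen).exists_walk_length_eq_dist a k
  refine exists_adj_of_walk p haK hk fun z hz ↦ ⟨k, hk, ?_⟩
  calc (cayleyGraph S).dist z k = (cayleyGraph S).dist k z := dist_comm
    _ ≤ p.reverse.length := dist_le_length_of_mem_support p.reverse (by simpa using hz)
    _ = (cayleyGraph S).dist a k := by simp [hp]
    _ < r := hak

/-- The translation is by `k⁻¹` for a point `k ∈ K` adjacent to `A`. -/
lemma exists_smul_subset_graphNbhd_one (hgen : Subgroup.closure S = ⊤) {n r : ℕ} {K A B : Set G}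
    (hK : graphDiam S K < n) (hA : IsCompOf (cayleyGraph S) (graphNbhd S K r \ K) A)
    (hB : IsCompOf (cayleyGraph S) (graphNbhd S K r \ K) B) :
    ∃ g : G, g • K ⊆ graphNbhd S {1} (n + 1) ∧ (g • A ∩ graphNbhd S {1} (n + 1)).Nonempty ∧
      (g • B ∩ graphNbhd S {1} (n + 1)).Nonempty := by
  obtain ⟨u, hu, k₀, hk₀, huk₀⟩ := exists_adj_of_isCompOf_graphNbhd hgen hA
  obtain ⟨v, hv, k₁, hk₁, hvk₁⟩ := exists_adj_of_isCompOf_graphNbhd hgen hB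
  have hmem : ∀ x, (cayleyGraph S).dist x k₀ < n + 1 → k₀⁻¹ • x ∈ graphNbhd S {1} (n + 1) :=
    fun x hx ↦ ⟨1, rfl, by rwa [← cayleyGraph_dist_mul_left k₀⁻¹, inv_mul_cancel] at hx⟩
  have hK' : ∀ k ∈ K, (cayleyGraph S).dist k k₀ < n := fun k hk ↦ by
    exact_mod_cast (dist_le_graphDiam hk hk₀).trans_lt hK
  have hadj : ∀ x, ∀ k ∈ K, (cayleyGraph S).Adj x k → (cayleyGraph S).dist x k₀ < n + 1 := by
    intro x k hk hxk
    have htri := (cayleyGraph_connected hgen).dist_triangle (u := x) (v := k) (w := k₀)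
    rw [dist_eq_one_iff_adj.mpr hxk] at htri
    have := hK' k hk
    omega
  refine ⟨k₀⁻¹, ?_, ⟨_, Set.smul_mem_smul_set hu, hmem _ (hadj _ _ hk₀ huk₀)⟩,
    ⟨_, Set.smul_mem_smul_set hv, hmem _ (hadj _ _ hk₁ hvk₁)⟩⟩
  rintro _ ⟨k, hk, rfl⟩
  exact hmem _ ((hK' k hk).trans (lt_add_one n))

lemma eventually_mem_reachableWithin_graphNbhd (hgen : Subgroup.closure S = ⊤) {T : Set G}
    {t u v : G} (ht : t ∈ T) (h : v ∈ (cayleyGraph S).reachableWithin Tᶜ u) :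
    ∀ᶠ ρ in atTop, v ∈ (cayleyGraph S).reachableWithin (graphNbhd S T ρ \ T) u := by
  obtain ⟨p, hp⟩ := h
  refine eventually_atTop.mpr ⟨p.length + (cayleyGraph S).dist u t + 1, fun ρ hρ ↦
    ⟨p, fun z hz ↦ ⟨⟨t, ht, ?_⟩, hp z hz⟩⟩⟩
  have hzu := dist_le_length_of_mem_support p hz
  rw [dist_comm] at hzu
  have := (cayleyGraph_connected hgen).dist_triangle (u := z) (v := u) (w := t)
  omega

lemma infinite_of_frequently_subset {C : Set G} {D : ℕ → Set G}
    (hD : Tendsto (fun i ↦ graphDiam S (D i)) atTop (𝓝 ⊤)) (hC : ∃ᶠ i in atTop, D i ⊆ C) :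
    C.Infinite := fun hfin ↦ by
  obtain ⟨i, hDC, hlt⟩ :=
    (hC.and_eventually (hD.eventually (lt_mem_nhds (graphDiam_lt_top hfin)))).exists
  exact (graphDiam_mono hDC).not_gt hlt

lemma one_lt_numEnds_of_ne {T : Set G} (hT : T.Finite) {C D : (cayleyGraph S).ComponentCompl T}
    (hC : C.supp.Infinite) (hD : D.supp.Infinite) (hCD : C ≠ D) : 1 < numEnds S := by
  have : Nontrivial {C : (cayleyGraph S).ComponentCompl T // C.supp.Infinite} :=
    ⟨⟨C, hC⟩, ⟨D, hD⟩, fun h ↦ hCD (congrArg Subtype.val h)⟩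
  exact ((ENat.one_lt_card_iff_nontrivial _).mpr this).trans_le (le_iSup₂_of_le T hT le_rfl)

lemma one_lt_numEnds_of_frequently_separated (hgen : Subgroup.closure S = ⊤) {T : Set G}
    (hT : T.Finite) {u v : G} {r : ℕ → ℕ} (hr : Tendsto r atTop atTop) {A B : ℕ → Set G}
    (hAdiam : Tendsto (fun i ↦ graphDiam S (A i)) atTop (𝓝 ⊤))
    (hBdiam : Tendsto (fun i ↦ graphDiam S (B i)) atTop (𝓝 ⊤))
    (hsep : ∃ᶠ i in atTop, IsCompOf (cayleyGraph S) (graphNbhd S T (r i) \ T) (A i) ∧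
      IsCompOf (cayleyGraph S) (graphNbhd S T (r i) \ T) (B i) ∧ A i ≠ B i ∧ u ∈ A i ∧ v ∈ B i) :
    1 < numEnds S := by
  obtain ⟨i₀, hA₀, hB₀, -, hu₀, hv₀⟩ := hsep.exists
  obtain ⟨⟨t, ht, -⟩, hu⟩ := hA₀.subset hu₀
  have hv : v ∉ T := (hB₀.subset hv₀).2
  have hAu : ∃ᶠ i in atTop, A i ⊆ (cayleyGraph S).componentComplMk hu := hsep.mono
    fun i h ↦ h.1.subset_componentComplMk (Set.sdiff_subset_compl _ _) h.2.2.2.1 hu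
  have hBv : ∃ᶠ i in atTop, B i ⊆ (cayleyGraph S).componentComplMk hv := hsep.mono
    fun i h ↦ h.2.1.subset_componentComplMk (Set.sdiff_subset_compl _ _) h.2.2.2.2 hv
  refine one_lt_numEnds_of_ne hT (infinite_of_frequently_subset hAdiam hAu)
    (infinite_of_frequently_subset hBdiam hBv) fun huv ↦ ?_
  have hvu : v ∈ (cayleyGraph S).reachableWithin Tᶜ u := by
    rw [← coe_componentComplMk hu, huv]
    exact componentComplMk_mem _ hv
  obtain ⟨i, ⟨hAi, hBi, hAB, hui, hvi⟩, hvi'⟩ := (hsep.and_eventually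
    (hr.eventually (eventually_mem_reachableWithin_graphNbhd hgen ht hvu))).exists
  exact hAB (hAi.eq_of_mem hBi (hAi.eq_reachableWithin hui ▸ hvi') hvi)

end Separation

theorem one_lt_ends_of_separating_sets_general {G : Type*} [Group G] (S : Set G) (hS : S.Finite)
    (hgen : Subgroup.closure S = ⊤) (n : ℕ) (r : ℕ → ℕ)
    (K : ℕ → Set G) (A B : ℕ → Set G)
    (hKdiam : ∀ i, graphDiam S (K i) < (n : ℕ∞))
    (hA : ∀ i, IsCompOf (cayleyGraph S) (graphNbhd S (K i) (r i) \ K i) (A i))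
    (hB : ∀ i, IsCompOf (cayleyGraph S) (graphNbhd S (K i) (r i) \ K i) (B i))
    (hAB : ∀ i, A i ≠ B i)
    (hr : Filter.Tendsto r Filter.atTop Filter.atTop)
    (hAdiam : Filter.Tendsto (fun i => graphDiam S (A i)) Filter.atTop (nhds ⊤))
    (hBdiam : Filter.Tendsto (fun i => graphDiam S (B i)) Filter.atTop (nhds ⊤)) :
    1 < numEnds S := by
  set ball := graphNbhd S {1} (n + 1)
  have hball : ball.Finite := finite_graphNbhd hS hgen (Set.finite_singleton 1) (n + 1)
  choose g hgK hgA hgB using fun i ↦ exists_smul_subset_graphNbhd_one hgen (hKdiam i) (hA i) (hB i)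
  choose u hu using hgA
  choose v hv using hgB
  -- pigeonhole: the translated configurations range over a finite set
  obtain ⟨⟨T, u₀, v₀⟩, ⟨hT : T ⊆ ball, -⟩, hfreq⟩ :=
    (hball.finite_subsets.prod (hball.prod hball)).frequently_exists
      (p := fun c i ↦ (g i • K i, u i, v i) = c) |>.mp <| Frequently.of_forall (f := atTop)
      fun i ↦ ⟨(g i • K i, u i, v i), ⟨hgK i, (hu i).2, (hv i).2⟩, rfl⟩
  refine one_lt_numEnds_of_frequently_separated hgen (hball.subset hT) hr
    (u := u₀) (v := v₀) (A := fun i ↦ g i • A i) (B := fun i ↦ g i • B i)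
    (by simpa only [graphDiam_smul] using hAdiam)
    (by simpa only [graphDiam_smul] using hBdiam) (hfreq.mono fun i hi ↦ ?_)
  obtain ⟨rfl, rfl, rfl⟩ : g i • K i = T ∧ u i = u₀ ∧ v i = v₀ := by simpa using hi
  exact ⟨(hA i).smul_graphNbhd (g i), (hB i).smul_graphNbhd (g i),
    (MulAction.injective (g i)).ne (hAB i), (hu i).1, (hv i).1⟩

/-- If there are a positive integer `n` and a sequence of positive integers `rᵢ → ∞`, and
compact sets `Kᵢ` with `diam Kᵢ < n` such that `N(Kᵢ, rᵢ) ∖ Kᵢ` has at least two connected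
components `Aᵢ`, `Bᵢ` whose diameters tend to infinity, then `G` has more than one end. -/
theorem one_lt_ends_of_separating_sets {G : Type*} [Group G] (S : Set G) (hS : S.Finite)
    (hgen : Subgroup.closure S = ⊤) (n : ℕ) (hn : 0 < n) (r : ℕ → ℕ)
    (hrpos : ∀ i, 0 < r i) (K : ℕ → Set G) (A B : ℕ → Set G)
    (hKcpt : ∀ i, (K i).Finite)
    (hKdiam : ∀ i, graphDiam S (K i) < (n : ℕ∞))
    (hA : ∀ i, IsCompOf (cayleyGraph S) (graphNbhd S (K i) (r i) \ K i) (A i))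
    (hB : ∀ i, IsCompOf (cayleyGraph S) (graphNbhd S (K i) (r i) \ K i) (B i))
    (hAB : ∀ i, A i ≠ B i)
    (hr : Filter.Tendsto r Filter.atTop Filter.atTop)
    (hAdiam : Filter.Tendsto (fun i => graphDiam S (A i)) Filter.atTop (nhds ⊤))
    (hBdiam : Filter.Tendsto (fun i => graphDiam S (B i)) Filter.atTop (nhds ⊤)) :
    1 < numEnds S :=
  one_lt_ends_of_separating_sets_general S hS hgen n r K A B hKdiam hA hB hAB hr hAdiam hBdiam
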